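/- Linearization of the Brown map on the tropical Jacobian: fix κ > 0 and let Υ_κ = {(x,y) : min(H(x,y), H(y,x)) = κ}, the concave nonagon with vertices V₁ = (κ,2κ), V₂ = (0,κ), V₃ = (−κ,κ), V₄ = (−κ,0), V₅ = (0,−κ), V₆ = (κ,−κ), V₇ = (κ,0), V₈ = (2κ,κ), V₉ = (κ,κ) traversed counterclockwise, each edge V_iV_{i+1} (indices mod 9) having lattice length κ, so the total lattice length is 9κ. Let ν : Υ_κ → ℝ/9κℤ be the bijection determined by ν(V_i) = (i−1)κ and affine on each edge (the point V_i + t(V_{i+1} − V_i), t ∈ [0,1], is sent to (i−1)κ + tκ). Then for every P ∈ Υ_κ, ν(Φ(P)) ≡ ν(P) + 5κ (mod 9κ). -/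

import Mathlib

/-- The Brown map `Φ(x,y) = (x̄, ȳ)` with `x̄ = -x + |y|` and `ȳ = -y + |x̄|`. -/
noncomputable def brownMap (p : ℝ × ℝ) : ℝ × ℝ :=
  (-p.1 + |p.2|, -p.2 + |(-p.1 + |p.2|)|)

/-- `H(x,y) = max(x, -y, -x+y, -x-y)`. -/
noncomputable def H (x y : ℝ) : ℝ :=
  max x (max (-y) (max (-x + y) (-x - y)))

/-- The Abel–Jacobi (lattice-length) bijection `ν : Υ_κ → ℝ/9κℤ` of the concave
nonagon `Υ_κ = {min(H(x,y), H(y,x)) = κ}` with vertices `V₁ = (κ,2κ)`,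
`V₂ = (0,κ)`, `V₃ = (−κ,κ)`, `V₄ = (−κ,0)`, `V₅ = (0,−κ)`, `V₆ = (κ,−κ)`,
`V₇ = (κ,0)`, `V₈ = (2κ,κ)`, `V₉ = (κ,κ)` (counterclockwise): it sends `V_i` to
`(i−1)κ` and is affine on each edge `V_iV_{i+1}`, every edge having lattice
length `κ`.  Explicitly, on `V₁V₂` (`y = x+κ, x ≥ 0`) it equals `κ − x`, on
`V₂V₃` (`y = κ, x ≤ 0`) it equals `κ − x`, on `V₃V₄` (`x = −κ`) it equals
`3κ − y`, on `V₄V₅` (`y = −x−κ`) it equals `4κ + x`, on `V₅V₆` (`y = −κ`) it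
equals `4κ + x`, on `V₆V₇` (`x = κ, y ≤ 0`) it equals `6κ + y`, on `V₇V₈`
(`y = x−κ, x ≥ κ`) it equals `5κ + x`, on `V₈V₉` (`y = κ, x ≥ κ`) it equals
`9κ − x`, and on `V₉V₁` (`x = κ, y ≥ κ`) it equals `7κ + y`. -/
noncomputable def nu (κ : ℝ) (p : ℝ × ℝ) : ℝ :=
  open Classical in
  if p.2 = p.1 + κ ∧ 0 ≤ p.1 then κ - p.1
  else if p.2 = κ ∧ p.1 ≤ 0 then κ - p.1
  else if p.1 = -κ then 3 * κ - p.2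
  else if p.2 = -p.1 - κ then 4 * κ + p.1
  else if p.2 = -κ then 4 * κ + p.1
  else if p.1 = κ ∧ p.2 ≤ 0 then 6 * κ + p.2
  else if p.2 = p.1 - κ ∧ κ ≤ p.1 then 5 * κ + p.1
  else if p.2 = κ ∧ κ ≤ p.1 then 9 * κ - p.1
  else if p.1 = κ ∧ κ ≤ p.2 then 7 * κ + p.2
  else 0


/-!
The nonagon is the union of its nine edges. The level set `H x y = κ` (with `H y x ≥ κ`)
consists of six of them, lying on the lines `x = κ`, `y = -κ`, `y = x + κ`, `x + y = -κ`;
writing these edges in a form that is stable under `(x, y) ↦ (y, x)` lets the same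
description cover the other branch of the minimum. On each edge the absolute values in `Φ`
have constant sign, so `Φ` is affine there and carries the edge `V_iV_{i+1}` onto
`V_{i+5}V_{i+6}`, preserving the lattice-length parametrisation: this is the translation by
`5κ`. The only wrinkle is the vertex `V₁`, where `ν` jumps from `9κ` to `0`.
-/

lemma brownMap_eq {x y a b : ℝ} (h₁ : -x + |y| = a) (h₂ : -y + |a| = b) :
    brownMap (x, y) = (a, b) := by
  rw [brownMap, h₁, h₂]

def BrownMapTranslates (κ : ℝ) (p : ℝ × ℝ) : Prop :=
  ∃ n : ℤ, nu κ (brownMap p) = nu κ p + 5 * κ + 9 * κ * n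

section Edges

variable {κ x y : ℝ}

lemma nu_V₁V₂ (hx : 0 ≤ x) : nu κ (x, x + κ) = κ - x := by
  simp [nu, hx]

lemma nu_V₂V₃ (hx : x ≤ 0) : nu κ (x, κ) = κ - x := by
  unfold nu; split_ifs <;> grind

lemma nu_V₃V₄ (hκ : 0 < κ) : nu κ (-κ, y) = 3 * κ - y := by
  unfold nu; split_ifs <;> grind

lemma nu_V₄V₅ (hκ : 0 < κ) (hx : -κ ≤ x) : nu κ (x, -x - κ) = 4 * κ + x := by
  unfold nu; split_ifs <;> grind

lemma nu_V₅V₆ (hκ : 0 < κ) (hx : 0 ≤ x) : nu κ (x, -κ) = 4 * κ + x := by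
  unfold nu; split_ifs <;> grind

lemma nu_V₆V₇ (hκ : 0 < κ) (hy₀ : -κ ≤ y) (hy₁ : y ≤ 0) : nu κ (κ, y) = 6 * κ + y := by
  unfold nu; split_ifs <;> grind

lemma nu_V₇V₈ (hκ : 0 < κ) (hy : 0 ≤ y) : nu κ (y + κ, y) = 6 * κ + y := by
  unfold nu; split_ifs <;> grind

lemma nu_V₈V₉ (hκ : 0 < κ) (hx : κ ≤ x) : nu κ (x, κ) = 9 * κ - x := by
  unfold nu; split_ifs <;> grind

/-- `nu` puts the vertex `V₁ = (κ, 2κ)` on the edge `V₁V₂`, where its value is `0`. -/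
lemma nu_V₉V₁ (hκ : 0 < κ) (hy₀ : κ ≤ y) (hy₁ : y < 2 * κ) : nu κ (κ, y) = 7 * κ + y := by
  unfold nu; split_ifs <;> grind

lemma brownMapTranslates_V₁V₂ (hκ : 0 < κ) (hx₀ : 0 ≤ x) (hx₁ : x ≤ κ) :
    BrownMapTranslates κ (x, x + κ) := by
  have hΦ : brownMap (x, x + κ) = (κ, -x) :=
    brownMap_eq (by rw [abs_of_nonneg] <;> linarith) (by rw [abs_of_nonneg] <;> linarith)
  refine ⟨0, ?_⟩
  rw [hΦ, nu_V₆V₇ hκ (by linarith) (by linarith), nu_V₁V₂ hx₀]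
  ring

lemma brownMapTranslates_V₂V₃ (hκ : 0 < κ) (hx : x ≤ 0) :
    BrownMapTranslates κ (x, κ) := by
  have hΦ : brownMap (x, κ) = (-x + κ, -x) :=
    brownMap_eq (by rw [abs_of_pos hκ]) (by rw [abs_of_nonneg] <;> linarith)
  refine ⟨0, ?_⟩
  rw [hΦ, nu_V₇V₈ hκ (by linarith), nu_V₂V₃ hx]
  ring

lemma brownMapTranslates_V₃V₄ (hκ : 0 < κ) (hy : 0 ≤ y) :
    BrownMapTranslates κ (-κ, y) := by
  have hΦ : brownMap (-κ, y) = (κ + y, κ) :=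
    brownMap_eq (by rw [abs_of_nonneg] <;> linarith) (by rw [abs_of_nonneg] <;> linarith)
  refine ⟨0, ?_⟩
  rw [hΦ, nu_V₈V₉ hκ (by linarith), nu_V₃V₄ hκ]
  ring

lemma brownMapTranslates_V₄V₅ (hκ : 0 < κ) (hxy : x + y = -κ) (hx : x ≤ 0) (hy : y ≤ 0) :
    BrownMapTranslates κ (x, y) := by
  obtain rfl : y = -x - κ := by linarith
  have hΦ : brownMap (x, -x - κ) = (κ, κ + (x + κ)) :=
    brownMap_eq (by rw [abs_of_nonpos] <;> linarith) (by rw [abs_of_nonneg] <;> linarith)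
  rw [BrownMapTranslates, hΦ, nu_V₄V₅ hκ (by linarith)]
  rcases hx.lt_or_eq with hx | rfl
  · exact ⟨0, by rw [nu_V₉V₁ hκ (by linarith) (by linarith)]; ring⟩
  · exact ⟨-1, by rw [zero_add, nu_V₁V₂ hκ.le]; push_cast; ring⟩

lemma brownMapTranslates_V₅V₆ (hκ : 0 < κ) (hx₀ : 0 ≤ x) (hx₁ : x ≤ κ) :
    BrownMapTranslates κ (x, -κ) := by
  have hΦ : brownMap (x, -κ) = (-x + κ, -x + κ + κ) :=
    brownMap_eq (by rw [abs_of_nonpos] <;> linarith) (by rw [abs_of_nonneg] <;> linarith)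
  refine ⟨-1, ?_⟩
  rw [hΦ, nu_V₁V₂ (by linarith), nu_V₅V₆ hκ hx₀]
  push_cast; ring

lemma brownMapTranslates_V₆V₇ (hκ : 0 < κ) (hy₀ : -κ ≤ y) (hy₁ : y ≤ 0) :
    BrownMapTranslates κ (κ, y) := by
  have hΦ : brownMap (κ, y) = (-κ - y, κ) :=
    brownMap_eq (by rw [abs_of_nonpos] <;> linarith) (by rw [abs_of_nonpos] <;> linarith)
  refine ⟨-1, ?_⟩
  rw [hΦ, nu_V₂V₃ (by linarith), nu_V₆V₇ hκ hy₀ hy₁]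
  push_cast; ring

lemma brownMapTranslates_V₇V₈ (hκ : 0 < κ) (hy : 0 ≤ y) :
    BrownMapTranslates κ (y + κ, y) := by
  have hΦ : brownMap (y + κ, y) = (-κ, κ - y) :=
    brownMap_eq (by rw [abs_of_nonneg] <;> linarith) (by rw [abs_of_nonpos] <;> linarith)
  refine ⟨-1, ?_⟩
  rw [hΦ, nu_V₃V₄ hκ, nu_V₇V₈ hκ hy]
  push_cast; ring

lemma brownMapTranslates_V₈V₉ (hκ : 0 < κ) (hx₀ : κ ≤ x) (hx₁ : x ≤ 2 * κ) :
    BrownMapTranslates κ (x, κ) := by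
  have hΦ : brownMap (x, κ) = (κ - x, -(κ - x) - κ) :=
    brownMap_eq (by rw [abs_of_nonneg] <;> linarith) (by rw [abs_of_nonpos] <;> linarith)
  refine ⟨-1, ?_⟩
  rw [hΦ, nu_V₄V₅ hκ (by linarith), nu_V₈V₉ hκ hx₀]
  push_cast; ring

lemma brownMapTranslates_V₉V₁ (hκ : 0 < κ) (hy₀ : κ ≤ y) (hy₁ : y ≤ 2 * κ) :
    BrownMapTranslates κ (κ, y) := by
  have hΦ : brownMap (κ, y) = (y - κ, -κ) :=
    brownMap_eq (by rw [abs_of_nonneg] <;> linarith) (by rw [abs_of_nonneg] <;> linarith)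
  rw [BrownMapTranslates, hΦ, nu_V₅V₆ hκ (by linarith)]
  rcases hy₁.lt_or_eq with hy₁ | rfl
  · exact ⟨-1, by rw [nu_V₉V₁ hκ hy₀ hy₁]; push_cast; ring⟩
  · exact ⟨0, by rw [two_mul, nu_V₁V₂ hκ.le]; push_cast; ring⟩

lemma mem_edges_of_H_eq (hκ : 0 < κ) (h₁ : H x y = κ) (h₂ : κ ≤ H y x) :
    (x = κ ∧ κ ≤ y ∧ y ≤ 2 * κ) ∨ (x = κ ∧ -κ ≤ y ∧ y ≤ 0) ∨ (y = -κ ∧ 0 ≤ x ∧ x ≤ κ) ∨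
      (y = x + κ ∧ 0 ≤ x ∧ x ≤ κ) ∨ (x = -κ ∧ 0 ≤ y ∧ y ≤ κ) ∨
      (x + y = -κ ∧ x ≤ 0 ∧ y ≤ 0) := by
  obtain ⟨c₁, c₂, c₃, c₄⟩ : x ≤ κ ∧ -y ≤ κ ∧ -x + y ≤ κ ∧ -x - y ≤ κ := by
    simpa only [H, max_le_iff] using h₁.le
  have hxy : κ ≤ x ∨ κ ≤ -y ∨ κ ≤ -x + y ∨ κ ≤ -x - y := by
    simpa only [H, le_max_iff] using h₁.ge
  have hyx : κ ≤ y ∨ κ ≤ -x ∨ κ ≤ -y + x ∨ κ ≤ -y - x := by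
    simpa only [H, le_max_iff] using h₂
  rcases hxy with d | d | d | d
  · rcases hyx with e | e | e | e
    · exact .inl ⟨by linarith, e, by linarith⟩
    · linarith
    · exact .inr <| .inl ⟨by linarith, by linarith, by linarith⟩
    · linarith
  · exact .inr <| .inr <| .inl ⟨by linarith, by linarith, c₁⟩
  · rcases hyx with e | e | e | e
    · exact .inr <| .inr <| .inr <| .inl ⟨by linarith, by linarith, c₁⟩
    · exact .inr <| .inr <| .inr <| .inr <| .inl ⟨by linarith, by linarith, by linarith⟩
    · linarith
    · exact .inr <| .inr <| .inr <| .inr <| .inl ⟨by linarith, by linarith, by linarith⟩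
  · exact .inr <| .inr <| .inr <| .inr <| .inr ⟨by linarith, by linarith, by linarith⟩

end Edges

/-- Linearization of the Brown map on the tropical Jacobian: on the nonagon
`Υ_κ` the Brown map is the translation by `5κ` on `ℝ/9κℤ`:
`ν(Φ(P)) ≡ ν(P) + 5κ (mod 9κ)`. -/
theorem brown_map_translation_on_jacobian (κ : ℝ) (hκ : 0 < κ) (p : ℝ × ℝ)
    (hp : min (H p.1 p.2) (H p.2 p.1) = κ) :
    ∃ n : ℤ, nu κ (brownMap p) = nu κ p + 5 * κ + 9 * κ * n := by
  obtain ⟨x, y⟩ := p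
  have hxy : κ ≤ H x y := hp ▸ min_le_left _ _
  have hyx : κ ≤ H y x := hp ▸ min_le_right _ _
  change BrownMapTranslates κ (x, y)
  rcases min_choice (H x y) (H y x) with h | h
  · rcases mem_edges_of_H_eq hκ (h.symm.trans hp) hyx with
      ⟨rfl, hy₀, hy₁⟩ | ⟨rfl, hy₀, hy₁⟩ | ⟨rfl, hx₀, hx₁⟩ | ⟨rfl, hx₀, hx₁⟩ | ⟨rfl, hy, -⟩ |
      ⟨hsum, hx, hy⟩
    exacts [brownMapTranslates_V₉V₁ hκ hy₀ hy₁, brownMapTranslates_V₆V₇ hκ hy₀ hy₁,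
      brownMapTranslates_V₅V₆ hκ hx₀ hx₁, brownMapTranslates_V₁V₂ hκ hx₀ hx₁,
      brownMapTranslates_V₃V₄ hκ hy, brownMapTranslates_V₄V₅ hκ hsum hx hy]
  · rcases mem_edges_of_H_eq hκ (h.symm.trans hp) hxy with
      ⟨rfl, hx₀, hx₁⟩ | ⟨rfl, -, hx⟩ | ⟨rfl, hy₀, -⟩ | ⟨rfl, hy, -⟩ | ⟨rfl, hx₀, hx₁⟩ |
      ⟨hsum, hy, hx⟩
    exacts [brownMapTranslates_V₈V₉ hκ hx₀ hx₁, brownMapTranslates_V₂V₃ hκ hx,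
      brownMapTranslates_V₃V₄ hκ hy₀, brownMapTranslates_V₇V₈ hκ hy,
      brownMapTranslates_V₅V₆ hκ hx₀ hx₁, brownMapTranslates_V₄V₅ hκ (by linarith) hx hy]
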